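/- arXiv:2107.06817 — 2 statements merged into one kernel-verified Lean document; each statement's English description precedes it below -/
import Mathlib

section
/- In the varying-cardinality construction, for indices i ∈ [1,m], j ∈ [1,n], the dot product τ_{i,j}^n · L_V^m equals (w_max·cos(a_i,v_j) + w_avg·avg(ps))/(w_max + w_avg), where avg(ps) is the average of all m·n pairwise cosine similarities. -/
open scoped BigOperators

noncomputable def cosSim {D : ℕ} (a b : EuclideanSpace ℝ (Fin D)) : ℝ :=
  (inner ℝ a b : ℝ) / (‖a‖ * ‖b‖)

noncomputable def avgSim {D m n : ℕ} (A : Fin m → EuclideanSpace ℝ (Fin D))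
    (V : Fin n → EuclideanSpace ℝ (Fin D)) : ℝ :=
  (∑ i, ∑ j, cosSim (A i) (V j)) / ((m : ℝ) * (n : ℝ))

noncomputable def maxSim {D m n : ℕ} (A : Fin m → EuclideanSpace ℝ (Fin D))
    (V : Fin n → EuclideanSpace ℝ (Fin D)) : ℝ :=
  ⨆ p : Fin m × Fin n, cosSim (A p.1) (V p.2)

noncomputable def simSet {D m n : ℕ} (wmax wavg : ℝ) (A : Fin m → EuclideanSpace ℝ (Fin D))
    (V : Fin n → EuclideanSpace ℝ (Fin D)) : ℝ :=
  (wmax * maxSim A V + wavg * avgSim A V) / (wmax + wavg)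

noncomputable def fpair {D m n : ℕ} (wmax wavg : ℝ) (A : Fin m → EuclideanSpace ℝ (Fin D))
    (V : Fin n → EuclideanSpace ℝ (Fin D)) (i : Fin m) (j : Fin n) : ℝ :=
  (wmax * cosSim (A i) (V j) + wavg * avgSim A V) / (wmax + wavg)

/-! Blockwise, the dot product of the normalized long vectors is the sum of the cosine
similarities `cos(a_i', v_j')`, each weighted by the coefficient of block `(i', j')` in `τ`:
the indicator picks out `cos(a_i, v_j)` and the uniform part yields the average. -/

theorem sum_inv_norm_mul_inv_norm_eq_cosSim {D : ℕ} (x y : EuclideanSpace ℝ (Fin D)) :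
    ∑ d, (‖x‖⁻¹ * x d) * (‖y‖⁻¹ * y d) = cosSim x y := by
  rw [cosSim, PiLp.inner_apply, div_eq_mul_inv, Finset.sum_mul, mul_inv]
  refine Finset.sum_congr rfl fun d _ => ?_
  simp only [RCLike.inner_apply, conj_trivial]
  ring

theorem sum_sum_ite_and_mul {ι κ : Type*} [Fintype ι] [Fintype κ] [DecidableEq ι]
    [DecidableEq κ] (f : κ → ι → ℝ) (a c w : ℝ) (j : κ) (i : ι) :
    ∑ j', ∑ i', (a * (if j' = j ∧ i' = i then 1 else 0) + c) / w * f j' i'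
      = (a * f j i + c * ∑ j', ∑ i', f j' i') / w := by
  have hsplit : ∀ j' i', (a * (if j' = j ∧ i' = i then 1 else 0) + c) / w * f j' i'
      = (if i' = i then (if j' = j then a * f j' i' / w else 0) else 0) + c / w * f j' i' := by
    intro j' i'
    split_ifs <;> simp_all [add_div, add_mul, div_mul_eq_mul_div]
  simp only [hsplit, Finset.sum_add_distrib, Finset.sum_ite_eq', Finset.mem_univ, if_true,
    ← Finset.mul_sum]
  ring

theorem stmt12_general (D m n : ℕ)
    (wmax wavg : ℝ)
    (A : Fin m → EuclideanSpace ℝ (Fin D)) (V : Fin n → EuclideanSpace ℝ (Fin D))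
    (i : Fin m) (j : Fin n) :
    (∑ j' : Fin n, ∑ i' : Fin m, ∑ d : Fin D,
        ((wmax * ((if j' = j ∧ i' = i then (1 : ℝ) else 0) * (‖A i'‖⁻¹ * A i' d))
            + (wavg / ((m : ℝ) * (n : ℝ))) * (‖A i'‖⁻¹ * A i' d)) / (wmax + wavg))
          * (‖V j'‖⁻¹ * V j' d))
      = (wmax * cosSim (A i) (V j) + wavg * avgSim A V) / (wmax + wavg) := by
  calc _ = ∑ j', ∑ i', (wmax * (if j' = j ∧ i' = i then 1 else 0) + wavg / ((m : ℝ) * n))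
          / (wmax + wavg) * cosSim (A i') (V j') := by
        refine Finset.sum_congr rfl fun j' _ => Finset.sum_congr rfl fun i' _ => ?_
        rw [← sum_inv_norm_mul_inv_norm_eq_cosSim, Finset.mul_sum]
        exact Finset.sum_congr rfl fun d _ => by ring
    _ = _ := by
      rw [sum_sum_ite_and_mul, avgSim, Finset.sum_comm (f := fun j' i' => cosSim (A i') (V j'))]
      ring

theorem stmt12 (D m n : ℕ) (hm : 0 < m) (hn : 0 < n)
    (wmax wavg : ℝ) (hw1 : 0 < wmax) (hw2 : 0 < wavg)
    (A : Fin m → EuclideanSpace ℝ (Fin D)) (V : Fin n → EuclideanSpace ℝ (Fin D))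
    (hA : ∀ i, A i ≠ 0) (hV : ∀ j, V j ≠ 0) (i : Fin m) (j : Fin n) :
    (∑ j' : Fin n, ∑ i' : Fin m, ∑ d : Fin D,
        ((wmax * ((if j' = j ∧ i' = i then (1 : ℝ) else 0) * (‖A i'‖⁻¹ * A i' d))
            + (wavg / ((m : ℝ) * (n : ℝ))) * (‖A i'‖⁻¹ * A i' d)) / (wmax + wavg))
          * (‖V j'‖⁻¹ * V j' d))
      = (wmax * cosSim (A i) (V j) + wavg * avgSim A V) / (wmax + wavg) :=
  stmt12_general D m n wmax wavg A V i j
end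

section
/- Correctness of the varying-cardinality search: max over all candidates V (of any cardinality n ∈ [1,M]) of sim(A, V) equals the maximum over n ∈ [1,M] and pairs (i,j) ∈ [1,|A|]×[1,n] of the best dot product τ_{i,j}^n · L_V^{|A|} over candidates V of cardinality n, and a candidate achieving this maximum is optimal. -/
open scoped BigOperators

/-! Only the `max` term of `simSet` depends on the pair, so for `wmax ≥ 0` the value
`simSet A V` is the maximum over `(i, j)` of `fpair A V i j`, attained at a pair realising
`maxSim A V`. The supremum over candidates `V` therefore commutes with this maximum over pairs.
A pair score `fpair A V₀ i₀ j₀` equal to the overall maximum bounds every `simSet A V` from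
above and is itself at most `simSet A V₀`. -/

lemma Set.finite_setOf_exists_mem_finset {ι α : Type*} (s : Finset ι) {P : ι → α → Prop}
    (h : ∀ i ∈ s, {x | P i x}.Finite) : {x | ∃ i ∈ s, P i x}.Finite := by
  convert s.finite_toSet.biUnion h using 1
  ext x
  simp

lemma Set.finite_setOf_exists_mem_finset_eq {ι α : Type*} (s : Finset ι) (f : ι → α) :
    {x | ∃ i ∈ s, x = f i}.Finite :=
  (s.finite_toSet.image f).subset fun _ ⟨i, hi, hx⟩ => ⟨i, hi, hx.symm⟩

section

variable {D m : ℕ} (wmax wavg : ℝ) (A : Fin m → EuclideanSpace ℝ (Fin D))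

lemma cosSim_le_maxSim {n : ℕ} (V : Fin n → EuclideanSpace ℝ (Fin D))
    (i : Fin m) (j : Fin n) : cosSim (A i) (V j) ≤ maxSim A V :=
  le_ciSup (Set.finite_range fun p : Fin m × Fin n => cosSim (A p.1) (V p.2)).bddAbove (i, j)

lemma exists_cosSim_eq_maxSim {n : ℕ} [Nonempty (Fin m)] [Nonempty (Fin n)]
    (V : Fin n → EuclideanSpace ℝ (Fin D)) : ∃ i j, cosSim (A i) (V j) = maxSim A V := by
  obtain ⟨p, hp⟩ :=
    exists_eq_ciSup_of_finite (f := fun p : Fin m × Fin n => cosSim (A p.1) (V p.2))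
  exact ⟨p.1, p.2, hp⟩

variable {wmax wavg} in
lemma fpair_le_simSet (hwmax : 0 ≤ wmax) (hw : 0 ≤ wmax + wavg) {n : ℕ}
    (V : Fin n → EuclideanSpace ℝ (Fin D)) (i : Fin m) (j : Fin n) :
    fpair wmax wavg A V i j ≤ simSet wmax wavg A V := by
  unfold fpair simSet
  gcongr
  exact cosSim_le_maxSim A V i j

lemma exists_fpair_eq_simSet {n : ℕ} [Nonempty (Fin m)] [Nonempty (Fin n)]
    (V : Fin n → EuclideanSpace ℝ (Fin D)) :
    ∃ i j, fpair wmax wavg A V i j = simSet wmax wavg A V := by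
  obtain ⟨i, j, h⟩ := exists_cosSim_eq_maxSim A V
  exact ⟨i, j, by rw [fpair, simSet, h]⟩

variable (C : (n : ℕ) → Finset (Fin n → EuclideanSpace ℝ (Fin D))) (N : Finset ℕ)

/-- The score τ_{i,j}^n · L_V^m maximised over the candidates `V` of cardinality `n`. -/
noncomputable def bestPairScore (n : ℕ) (i : Fin m) (j : Fin n) : ℝ :=
  sSup {y : ℝ | ∃ V ∈ C n, y = fpair wmax wavg A V i j}

noncomputable def candidateScores : Set ℝ :=
  {x : ℝ | ∃ n ∈ N, ∃ V ∈ C n, x = simSet wmax wavg A V}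

noncomputable def pairScores : Set ℝ :=
  {x : ℝ | ∃ n ∈ N, (C n).Nonempty ∧ ∃ i : Fin m, ∃ j : Fin n,
    x = bestPairScore wmax wavg A C n i j}

lemma fpair_le_bestPairScore {n : ℕ} {V : Fin n → EuclideanSpace ℝ (Fin D)} (hV : V ∈ C n)
    (i : Fin m) (j : Fin n) : fpair wmax wavg A V i j ≤ bestPairScore wmax wavg A C n i j :=
  le_csSup (Set.finite_setOf_exists_mem_finset_eq _ _).bddAbove ⟨V, hV, rfl⟩

lemma bddAbove_candidateScores : BddAbove (candidateScores wmax wavg A C N) :=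
  (Set.finite_setOf_exists_mem_finset N fun n _ =>
    Set.finite_setOf_exists_mem_finset_eq (C n) _).bddAbove

lemma bddAbove_pairScores : BddAbove (pairScores wmax wavg A C N) := by
  refine (Set.finite_setOf_exists_mem_finset N fun n _ => ?_).bddAbove
  refine (Set.finite_range fun p : Fin m × Fin n =>
    bestPairScore wmax wavg A C n p.1 p.2).subset ?_
  rintro x ⟨-, i, j, rfl⟩
  exact ⟨(i, j), rfl⟩

variable {wmax wavg A C N}

lemma simSet_le_sSup_pairScores [Nonempty (Fin m)] (hN : ∀ n ∈ N, 0 < n) {n : ℕ}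
    (hn : n ∈ N) {V : Fin n → EuclideanSpace ℝ (Fin D)} (hV : V ∈ C n) :
    simSet wmax wavg A V ≤ sSup (pairScores wmax wavg A C N) := by
  have : Nonempty (Fin n) := Fin.pos_iff_nonempty.mp (hN n hn)
  obtain ⟨i, j, hij⟩ := exists_fpair_eq_simSet wmax wavg A V
  calc simSet wmax wavg A V = fpair wmax wavg A V i j := hij.symm
    _ ≤ bestPairScore wmax wavg A C n i j := fpair_le_bestPairScore wmax wavg A C hV i j
    _ ≤ sSup (pairScores wmax wavg A C N) :=
      le_csSup (bddAbove_pairScores wmax wavg A C N) ⟨n, hn, ⟨V, hV⟩, i, j, rfl⟩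

lemma le_sSup_candidateScores_of_mem_pairScores (hwmax : 0 ≤ wmax) (hw : 0 ≤ wmax + wavg)
    {x : ℝ} (hx : x ∈ pairScores wmax wavg A C N) :
    x ≤ sSup (candidateScores wmax wavg A C N) := by
  obtain ⟨n, hn, ⟨W, hW⟩, i, j, rfl⟩ := hx
  refine csSup_le ⟨_, W, hW, rfl⟩ ?_
  rintro y ⟨V, hV, rfl⟩
  exact (fpair_le_simSet A hwmax hw V i j).trans
    (le_csSup (bddAbove_candidateScores wmax wavg A C N) ⟨n, hn, V, hV, rfl⟩)

lemma sSup_candidateScores_eq_sSup_pairScores [Nonempty (Fin m)] (hwmax : 0 ≤ wmax)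
    (hw : 0 ≤ wmax + wavg) (hN : ∀ n ∈ N, 0 < n) (hC : ∃ n ∈ N, (C n).Nonempty) :
    sSup (candidateScores wmax wavg A C N) = sSup (pairScores wmax wavg A C N) := by
  obtain ⟨n, hn, V, hV⟩ := hC
  have : Nonempty (Fin n) := Fin.pos_iff_nonempty.mp (hN n hn)
  apply le_antisymm
  · refine csSup_le ⟨_, n, hn, V, hV, rfl⟩ ?_
    rintro x ⟨k, hk, W, hW, rfl⟩
    exact simSet_le_sSup_pairScores hN hk hW
  · refine csSup_le
      ⟨_, n, hn, ⟨V, hV⟩, Classical.arbitrary _, Classical.arbitrary _, rfl⟩ ?_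
    exact fun x hx => le_sSup_candidateScores_of_mem_pairScores hwmax hw hx

end

theorem stmt13_general (D M m : ℕ) (hm : 0 < m)
    (A : Fin m → EuclideanSpace ℝ (Fin D))
    (wmax wavg : ℝ) (hw1 : 0 < wmax) (hw2 : 0 < wavg)
    (C : (n : ℕ) → Finset (Fin n → EuclideanSpace ℝ (Fin D)))
    (hCne : ∃ n ∈ Finset.Icc 1 M, (C n).Nonempty) :
    sSup {x : ℝ | ∃ n ∈ Finset.Icc 1 M, ∃ V ∈ C n, x = simSet wmax wavg A V}
      = sSup {x : ℝ | ∃ n ∈ Finset.Icc 1 M, (C n).Nonempty ∧ ∃ i : Fin m, ∃ j : Fin n,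
          x = sSup {y : ℝ | ∃ V ∈ C n, y = fpair wmax wavg A V i j}} ∧
    ∀ n₀ ∈ Finset.Icc 1 M, ∀ V₀ ∈ C n₀, ∀ i₀ : Fin m, ∀ j₀ : Fin n₀,
      fpair wmax wavg A V₀ i₀ j₀
          = sSup {x : ℝ | ∃ n ∈ Finset.Icc 1 M, (C n).Nonempty ∧ ∃ i : Fin m, ∃ j : Fin n,
              x = sSup {y : ℝ | ∃ V ∈ C n, y = fpair wmax wavg A V i j}} →
      ∀ n ∈ Finset.Icc 1 M, ∀ V ∈ C n,
        simSet wmax wavg A V ≤ simSet wmax wavg A V₀ := by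
  have : Nonempty (Fin m) := Fin.pos_iff_nonempty.mp hm
  have hN : ∀ n ∈ Finset.Icc 1 M, 0 < n := fun n hn => (Finset.mem_Icc.mp hn).1
  have hw : 0 ≤ wmax + wavg := by positivity
  refine ⟨sSup_candidateScores_eq_sSup_pairScores hw1.le hw hN hCne, ?_⟩
  intro n₀ _ V₀ _ i₀ j₀ hopt n hn V hV
  calc simSet wmax wavg A V ≤ sSup (pairScores wmax wavg A C (Finset.Icc 1 M)) :=
        simSet_le_sSup_pairScores hN hn hV
    _ = fpair wmax wavg A V₀ i₀ j₀ := hopt.symm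
    _ ≤ simSet wmax wavg A V₀ := fpair_le_simSet A hw1.le hw V₀ i₀ j₀

theorem stmt13 (D M m : ℕ) (hm : 0 < m) (hM : 1 ≤ M)
    (A : Fin m → EuclideanSpace ℝ (Fin D)) (hA : ∀ i, A i ≠ 0)
    (wmax wavg : ℝ) (hw1 : 0 < wmax) (hw2 : 0 < wavg)
    (C : (n : ℕ) → Finset (Fin n → EuclideanSpace ℝ (Fin D)))
    (hCne : ∃ n ∈ Finset.Icc 1 M, (C n).Nonempty)
    (hCz : ∀ n : ℕ, ∀ V ∈ C n, ∀ j, V j ≠ 0) :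
    sSup {x : ℝ | ∃ n ∈ Finset.Icc 1 M, ∃ V ∈ C n, x = simSet wmax wavg A V}
      = sSup {x : ℝ | ∃ n ∈ Finset.Icc 1 M, (C n).Nonempty ∧ ∃ i : Fin m, ∃ j : Fin n,
          x = sSup {y : ℝ | ∃ V ∈ C n, y = fpair wmax wavg A V i j}} ∧
    ∀ n₀ ∈ Finset.Icc 1 M, ∀ V₀ ∈ C n₀, ∀ i₀ : Fin m, ∀ j₀ : Fin n₀,
      fpair wmax wavg A V₀ i₀ j₀
          = sSup {x : ℝ | ∃ n ∈ Finset.Icc 1 M, (C n).Nonempty ∧ ∃ i : Fin m, ∃ j : Fin n,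
              x = sSup {y : ℝ | ∃ V ∈ C n, y = fpair wmax wavg A V i j}} →
      ∀ n ∈ Finset.Icc 1 M, ∀ V ∈ C n,
        simSet wmax wavg A V ≤ simSet wmax wavg A V₀ :=
  stmt13_general D M m hm A wmax wavg hw1 hw2 C hCne
end
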